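/- Let (E, 𝔈) be a measurable space, Q a Markov kernel on E, and suppose there exist m ∈ ℕ⁺, a measurable set B ∈ 𝔈, and p ∈ (0,1] such that ℙ_z(z_m ∈ B) ≥ p for every z ∈ E. Then the hitting time τ = inf{n ∈ ℕ : z_n ∈ B} satisfies ℙ_z(τ > km) ≤ (1 − p)^k for every z ∈ E and every k ∈ ℕ; in particular τ < ∞ ℙ_z-almost surely for every z, and for every β₁ with 0 < β₁ < m^{−1} ln((1 − p)^{−1}) one has sup_{z∈E} 𝔼_z exp(β₁ τ) < ∞. -/

import Mathlib

open MeasureTheory ProbabilityTheory Filter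
open scoped NNReal ENNReal

noncomputable section

/-- The natural filtration of the coordinate process on path space: the σ-algebra generated by
the coordinates `ω 0, …, ω n`. -/
def natFiltration (E : Type*) [m : MeasurableSpace E] (n : ℕ) : MeasurableSpace (ℕ → E) :=
  ⨆ k ∈ Finset.range (n + 1), MeasurableSpace.comap (fun ω : ℕ → E => ω k) m

/-- A measure `Pz` on path space is the law of a homogeneous Markov chain with one-step
transition kernel `Q`: conditionally on the first `n + 1` coordinates, the distribution of the
`(n+1)`-st coordinate is `Q (ω n, ·)`. -/
def IsMarkovChainLaw {E : Type*} [MeasurableSpace E] (Q : Kernel E E)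
    (Pz : Measure (ℕ → E)) : Prop :=
  ∀ (n : ℕ) (C : Set E), MeasurableSet C →
    (fun ω => (Q (ω n) C).toReal) =ᵐ[Pz]
      Pz[(fun ω => Set.indicator {ω' : ℕ → E | ω' (n + 1) ∈ C} (fun _ => (1 : ℝ)) ω) |
        natFiltration E n]

namespace MarkovRecurrenceAux

variable {E : Type*} [MeasurableSpace E]

lemma natFiltration_le (E : Type*) [MeasurableSpace E] (n : ℕ) :
    natFiltration E n ≤ (inferInstance : MeasurableSpace (ℕ → E)) := by
  refine iSup₂_le fun k _ => ?_
  exact (measurable_pi_apply k).comap_le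

lemma measurable_eval_natFiltration {n j : ℕ} (hj : j ≤ n) :
    Measurable[natFiltration E n] (fun ω : ℕ → E => ω j) := by
  rw [measurable_iff_comap_le, natFiltration]
  exact le_biSup (fun k => MeasurableSpace.comap (fun ω : ℕ → E => ω k)
    (inferInstance : MeasurableSpace E)) (Finset.mem_range.mpr (Nat.lt_succ_of_le hj))

lemma natFiltration_mono {n n' : ℕ} (h : n ≤ n') :
    natFiltration E n ≤ natFiltration E n' := by
  rw [natFiltration, natFiltration]
  refine iSup₂_le fun k hk => ?_
  refine le_biSup (fun k => MeasurableSpace.comap (fun ω : ℕ → E => ω k)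
    (inferInstance : MeasurableSpace E)) (Finset.mem_range.mpr ?_)
  have := Finset.mem_range.mp hk
  omega

variable {Q : Kernel E E} [IsMarkovKernel Q] {Pz : Measure (ℕ → E)}
  [IsProbabilityMeasure Pz]

lemma step_indicator (hM : IsMarkovChainLaw Q Pz) (n : ℕ) {C : Set E} (hC : MeasurableSet C)
    {A : Set (ℕ → E)} (hA : MeasurableSet[natFiltration E n] A) :
    Pz ({ω | ω (n + 1) ∈ C} ∩ A) = ∫⁻ ω in A, Q (ω n) C ∂Pz := by
  have hle := natFiltration_le E n
  have hAmeas : MeasurableSet A := hle _ hA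
  have hS : MeasurableSet {ω' : ℕ → E | ω' (n + 1) ∈ C} := measurable_pi_apply (n + 1) hC
  have hint : Integrable
      (fun ω => Set.indicator {ω' : ℕ → E | ω' (n + 1) ∈ C} (fun _ => (1 : ℝ)) ω) Pz := by
    exact (integrable_const (1 : ℝ)).indicator hS
  have hQmeas : Measurable fun ω : ℕ → E => Q (ω n) C :=
    (Q.measurable_coe hC).comp (measurable_pi_apply n)
  have h2 := setIntegral_condExp hle hint hA
  have h1 := hM n C hC
  have h3 : ∫ ω in A, (Q (ω n) C).toReal ∂Pz
      = ∫ ω in A, Set.indicator {ω' : ℕ → E | ω' (n + 1) ∈ C} (fun _ => (1 : ℝ)) ω ∂Pz := by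
    rw [integral_congr_ae (ae_restrict_of_ae h1), h2]
  have h4 : ∫ ω in A, Set.indicator {ω' : ℕ → E | ω' (n + 1) ∈ C} (fun _ => (1 : ℝ)) ω ∂Pz
      = (Pz ({ω | ω (n + 1) ∈ C} ∩ A)).toReal := by
    rw [integral_indicator hS, setIntegral_const, measureReal_def, Measure.restrict_apply hS, smul_eq_mul,
      mul_one]
  have h5 : ∫ ω in A, (Q (ω n) C).toReal ∂Pz = (∫⁻ ω in A, Q (ω n) C ∂Pz).toReal := by
    rw [integral_toReal (hQmeas.aemeasurable.restrict)]
    exact Filter.Eventually.of_forall fun ω => measure_lt_top _ _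
  have hfin : ∫⁻ ω in A, Q (ω n) C ∂Pz ≠ ⊤ := by
    have hle1 : ∫⁻ ω in A, Q (ω n) C ∂Pz ≤ Pz A := by
      calc ∫⁻ ω in A, Q (ω n) C ∂Pz ≤ ∫⁻ _ in A, 1 ∂Pz :=
            lintegral_mono fun ω => prob_le_one
        _ = Pz A := by rw [setLIntegral_one]
    exact ne_of_lt (lt_of_le_of_lt hle1 (measure_lt_top _ _))
  refine (ENNReal.toReal_eq_toReal_iff' (measure_ne_top _ _) hfin).mp ?_
  rw [← h5, h3, h4]

lemma step_lintegral (hM : IsMarkovChainLaw Q Pz) {f : E → ℝ≥0∞} (hf : Measurable f) :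
    ∀ (n : ℕ) ⦃A : Set (ℕ → E)⦄, MeasurableSet[natFiltration E n] A →
      ∫⁻ ω in A, f (ω (n + 1)) ∂Pz = ∫⁻ ω in A, ∫⁻ y, f y ∂(Q (ω n)) ∂Pz := by
  refine Measurable.ennreal_induction
    (motive := fun f : E → ℝ≥0∞ => ∀ (n : ℕ) ⦃A : Set (ℕ → E)⦄,
      MeasurableSet[natFiltration E n] A →
      ∫⁻ ω in A, f (ω (n + 1)) ∂Pz = ∫⁻ ω in A, ∫⁻ y, f y ∂(Q (ω n)) ∂Pz)
    ?_ ?_ ?_ hf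
  · intro c s hs n A hA
    have hAmeas : MeasurableSet A := natFiltration_le E n _ hA
    have hLHS : ∫⁻ ω in A, Set.indicator s (fun _ => c) (ω (n + 1)) ∂Pz
        = c * Pz ({ω | ω (n + 1) ∈ s} ∩ A) := by
      rw [lintegral_indicator_const_comp (measurable_pi_apply (n + 1)) hs]
      rw [Measure.restrict_apply (measurable_pi_apply (n + 1) hs)]
      rfl
    rw [hLHS]
    have hRHS : ∀ ω : ℕ → E, (∫⁻ y, Set.indicator s (fun _ => c) y ∂(Q (ω n)))
        = c * Q (ω n) s := fun ω => lintegral_indicator_const hs c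
    calc c * Pz ({ω | ω (n + 1) ∈ s} ∩ A)
        = c * ∫⁻ ω in A, Q (ω n) s ∂Pz := by rw [step_indicator hM n hs hA]
      _ = ∫⁻ ω in A, c * Q (ω n) s ∂Pz := by
          have hmeas : Measurable fun ω : ℕ → E => Q (ω n) s :=
            (Q.measurable_coe hs).comp (measurable_pi_apply n)
          exact (lintegral_const_mul c hmeas).symm
      _ = ∫⁻ ω in A, ∫⁻ y, Set.indicator s (fun _ => c) y ∂(Q (ω n)) ∂Pz := by
          exact (lintegral_congr fun ω => (hRHS ω).symm)
  · intro f g _ hfm hgm hfP hgP n A hA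
    have h1 : ∫⁻ ω in A, (f + g) (ω (n + 1)) ∂Pz
        = ∫⁻ ω in A, f (ω (n + 1)) ∂Pz + ∫⁻ ω in A, g (ω (n + 1)) ∂Pz := by
      simp only [Pi.add_apply]
      exact lintegral_add_left (hfm.comp (measurable_pi_apply (n + 1))) _
    have h2 : ∫⁻ ω in A, ∫⁻ y, (f + g) y ∂(Q (ω n)) ∂Pz
        = ∫⁻ ω in A, ∫⁻ y, f y ∂(Q (ω n)) ∂Pz + ∫⁻ ω in A, ∫⁻ y, g y ∂(Q (ω n)) ∂Pz := by
      have : ∀ ω : ℕ → E, (∫⁻ y, (f + g) y ∂(Q (ω n)))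
          = (∫⁻ y, f y ∂(Q (ω n))) + ∫⁻ y, g y ∂(Q (ω n)) := by
        intro ω
        simp only [Pi.add_apply]
        exact lintegral_add_left hfm _
      rw [lintegral_congr this]
      exact lintegral_add_left ((Measurable.lintegral_kernel hfm).comp (measurable_pi_apply n)) _
    rw [h1, h2, hfP n hA, hgP n hA]
  · intro f hfm hmono hfP n A hA
    calc ∫⁻ ω in A, ⨆ i, f i (ω (n + 1)) ∂Pz
        = ⨆ i, ∫⁻ ω in A, f i (ω (n + 1)) ∂Pz := by
          exact lintegral_iSup (fun i => (hfm i).comp (measurable_pi_apply (n + 1)))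
            (fun i j hij ω => hmono hij _)
      _ = ⨆ i, ∫⁻ ω in A, ∫⁻ y, f i y ∂(Q (ω n)) ∂Pz := by
          exact iSup_congr fun i => hfP i n hA
      _ = ∫⁻ ω in A, ⨆ i, ∫⁻ y, f i y ∂(Q (ω n)) ∂Pz := by
          refine (lintegral_iSup (fun i =>
            (Measurable.lintegral_kernel (hfm i)).comp (measurable_pi_apply n))
            (fun i j hij ω => lintegral_mono fun y => hmono hij y)).symm
      _ = ∫⁻ ω in A, ∫⁻ y, ⨆ i, f i y ∂(Q (ω n)) ∂Pz := by
          refine lintegral_congr fun ω => ?_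
          rw [lintegral_iSup (fun i => hfm i) (fun i j hij y => hmono hij y)]

/-- Iterates of the kernel applied to the indicator of `B`. -/
def hfun (Q : Kernel E E) (B : Set E) : ℕ → E → ℝ≥0∞
  | 0 => B.indicator fun _ => 1
  | (j + 1) => fun x => ∫⁻ y, hfun Q B j y ∂(Q x)

lemma measurable_hfun (Q : Kernel E E) [IsMarkovKernel Q] {B : Set E} (hB : MeasurableSet B) :
    ∀ j, Measurable (hfun Q B j)
  | 0 => measurable_const.indicator hB
  | (j + 1) => Measurable.lintegral_kernel (measurable_hfun Q hB j)

lemma hfun_eq (hM : IsMarkovChainLaw Q Pz) {B : Set E} (hB : MeasurableSet B) (j : ℕ) :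
    ∀ (n : ℕ) ⦃A : Set (ℕ → E)⦄, MeasurableSet[natFiltration E n] A →
      ∫⁻ ω in A, B.indicator (fun _ => (1 : ℝ≥0∞)) (ω (n + j)) ∂Pz
        = ∫⁻ ω in A, hfun Q B j (ω n) ∂Pz := by
  induction j with
  | zero => intro n A hA; rfl
  | succ j ih =>
    intro n A hA
    have hA' : MeasurableSet[natFiltration E (n + 1)] A := natFiltration_mono (by omega) _ hA
    have h1 := ih (n + 1) hA'
    have h2 := step_lintegral hM (measurable_hfun Q hB j) n hA
    have hidx : n + (j + 1) = (n + 1) + j := by omega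
    rw [hidx] at *
    rw [h1, h2]
    rfl

lemma hfun_ge (hM : IsMarkovChainLaw Q Pz) {B : Set E} (hB : MeasurableSet B) (m : ℕ)
    {z : E} (hinit : Pz.map (fun ω => ω 0) = Measure.dirac z) :
    hfun Q B m z = Pz {ω | ω m ∈ B} := by
  have h := hfun_eq hM hB m 0 (@MeasurableSet.univ (ℕ → E) (natFiltration E 0))
  rw [Measure.restrict_univ] at h
  have hLHS : ∫⁻ ω, B.indicator (fun _ => (1 : ℝ≥0∞)) (ω (0 + m)) ∂Pz
      = Pz {ω | ω m ∈ B} := by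
    rw [lintegral_indicator_const_comp (measurable_pi_apply (0 + m)) hB, one_mul]
    norm_num
    rfl
  have hRHS : ∫⁻ ω, hfun Q B m (ω 0) ∂Pz = hfun Q B m z := by
    rw [← lintegral_map (measurable_hfun Q hB m) (measurable_pi_apply 0), hinit,
      lintegral_dirac' _ (measurable_hfun Q hB m)]
  rw [← hRHS, ← h, hLHS]

end MarkovRecurrenceAux

open MarkovRecurrenceAux in
/-- If a Markov chain hits a set `B` at time `m` with probability at least `p`
from every starting point, then the hitting time `τ = inf {n : z_n ∈ B}` satisfies
`ℙ_z(τ > km) ≤ (1 − p)^k`; in particular `τ < ∞` a.s. and `sup_z 𝔼_z exp(β₁ τ) < ∞` for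
every `0 < β₁ < m⁻¹ ln((1 − p)⁻¹)`. -/
theorem markov_recurrence
    {E : Type*} [MeasurableSpace E]
    (Q : Kernel E E) [IsMarkovKernel Q]
    (P : E → Measure (ℕ → E)) (hPprob : ∀ z, IsProbabilityMeasure (P z))
    (hinit : ∀ z, (P z).map (fun ω => ω 0) = Measure.dirac z)
    (hMarkov : ∀ z, IsMarkovChainLaw Q (P z))
    (m : ℕ) (hm : 1 ≤ m) (B : Set E) (hB : MeasurableSet B)
    (p : ℝ) (hp0 : 0 < p) (hp1 : p ≤ 1)
    (hhit : ∀ z : E, ENNReal.ofReal p ≤ P z {ω | ω m ∈ B}) :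
    (∀ (z : E) (k : ℕ), P z {ω | ∀ j ≤ k * m, ω j ∉ B} ≤ ENNReal.ofReal ((1 - p) ^ k)) ∧
      (∀ z : E, P z {ω | ∃ n : ℕ, ω n ∈ B} = 1) ∧
      ∀ β₁ : ℝ, 0 < β₁ → 1 - p < Real.exp (-(β₁ * m)) →
        (⨆ z : E, ∫⁻ ω, ENNReal.ofReal
            (Real.exp (β₁ * (sInf {n : ℕ | ω n ∈ B} : ℕ))) ∂(P z)) < ⊤ := by
  haveI := hPprob
  set Aset : ℕ → Set (ℕ → E) := fun k => {ω | ∀ j ≤ k * m, ω j ∉ B} with hAset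
  -- the hfun bound
  have hfun_ge_p : ∀ x : E, ENNReal.ofReal p ≤ hfun Q B m x := fun x => by
    rw [hfun_ge (hMarkov x) hB m (hinit x)]; exact hhit x
  -- measurability of `Aset k` in the filtration
  have hAmeasF : ∀ k, MeasurableSet[natFiltration E (k * m)] (Aset k) := by
    intro k
    have : Aset k = ⋂ (j : ℕ) (_ : j ≤ k * m), (fun ω : ℕ → E => ω j) ⁻¹' Bᶜ := by
      ext ω; simp [hAset]
    rw [this]
    exact MeasurableSet.iInter fun j => MeasurableSet.iInter fun hj =>
      measurable_eval_natFiltration hj hB.compl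
  have hAmeas : ∀ k, MeasurableSet (Aset k) := fun k => natFiltration_le E (k * m) _ (hAmeasF k)
  -- main geometric estimate
  have key1 : ∀ (z : E) (k : ℕ), P z (Aset k) ≤ (ENNReal.ofReal (1 - p)) ^ k := by
    intro z k
    induction k with
    | zero => simpa using prob_le_one
    | succ k ih =>
      have hstep : P z (Aset (k + 1)) ≤ ENNReal.ofReal (1 - p) * P z (Aset k) := by
        set n := k * m with hn
        set S : Set (ℕ → E) := {ω | ω (n + m) ∈ B} with hS
        have hSmeas : MeasurableSet S := measurable_pi_apply (n + m) hB
        -- hitting probability from `Aset k`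
        have hwit : ENNReal.ofReal p * P z (Aset k) ≤ P z (S ∩ Aset k) := by
          have h := hfun_eq (hMarkov z) hB m n (hAmeasF k)
          have hLHS : ∫⁻ ω in Aset k, B.indicator (fun _ => (1 : ℝ≥0∞)) (ω (n + m)) ∂(P z)
              = P z (S ∩ Aset k) := by
            rw [lintegral_indicator_const_comp (measurable_pi_apply (n + m)) hB, one_mul,
              Measure.restrict_apply (measurable_pi_apply (n + m) hB)]
            rfl
          have hRHS : ENNReal.ofReal p * P z (Aset k)
              ≤ ∫⁻ ω in Aset k, hfun Q B m (ω n) ∂(P z) := by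
            calc ENNReal.ofReal p * P z (Aset k)
                = ∫⁻ _ in Aset k, ENNReal.ofReal p ∂(P z) := by
                  rw [setLIntegral_const]
              _ ≤ ∫⁻ ω in Aset k, hfun Q B m (ω n) ∂(P z) :=
                  lintegral_mono fun ω => hfun_ge_p (ω n)
          rw [← hLHS, h]; exact hRHS
        have hsub : Aset (k + 1) ⊆ Aset k \ S := by
          intro ω hω
          refine ⟨fun j hj => hω j (le_trans hj (by nlinarith [Nat.mul_le_mul_right m (Nat.le_succ k)])), fun hmem => ?_⟩
          exact hω (n + m) (by simp [hn, Nat.succ_mul]) hmem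
        calc P z (Aset (k + 1)) ≤ P z (Aset k \ S) := measure_mono hsub
          _ = P z (Aset k \ (S ∩ Aset k)) := by rw [Set.diff_inter_self_eq_diff]
          _ = P z (Aset k) - P z (S ∩ Aset k) := by
              rw [measure_diff Set.inter_subset_right (hSmeas.inter (hAmeas k)).nullMeasurableSet
                (measure_ne_top _ _)]
          _ ≤ P z (Aset k) - ENNReal.ofReal p * P z (Aset k) := tsub_le_tsub_left hwit _
          _ = (1 - ENNReal.ofReal p) * P z (Aset k) := by
              rw [ENNReal.sub_mul (fun _ _ => measure_ne_top _ _), one_mul]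
          _ = ENNReal.ofReal (1 - p) * P z (Aset k) := by
              rw [ENNReal.ofReal_sub 1 hp0.le, ENNReal.ofReal_one]
      calc P z (Aset (k + 1)) ≤ ENNReal.ofReal (1 - p) * P z (Aset k) := hstep
        _ ≤ ENNReal.ofReal (1 - p) * (ENNReal.ofReal (1 - p)) ^ k :=
            mul_le_mul_right ih _
        _ = (ENNReal.ofReal (1 - p)) ^ (k + 1) := (pow_succ' _ _).symm
  have key1' : ∀ (z : E) (k : ℕ), P z (Aset k) ≤ ENNReal.ofReal ((1 - p) ^ k) := by
    intro z k
    rw [ENNReal.ofReal_pow (by linarith)]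
    exact key1 z k
  refine ⟨key1', ?_, ?_⟩
  · -- almost sure hitting
    intro z
    set N : Set (ℕ → E) := {ω | ∀ n, ω n ∉ B} with hN
    have hNmeas : MeasurableSet N := by
      have : N = ⋂ (n : ℕ), (fun ω : ℕ → E => ω n) ⁻¹' Bᶜ := by ext ω; simp [hN]
      rw [this]
      exact MeasurableSet.iInter fun n => (measurable_pi_apply n) hB.compl
    have hNsub : ∀ k, N ⊆ Aset k := fun k ω hω j _ => hω j
    have hN0 : P z N = 0 := by
      have htend : Tendsto (fun k : ℕ => ENNReal.ofReal ((1 - p) ^ k)) atTop (nhds 0) := by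
        have : Tendsto (fun k : ℕ => (1 - p) ^ k) atTop (nhds 0) :=
          tendsto_pow_atTop_nhds_zero_of_lt_one (by linarith) (by linarith)
        simpa using (ENNReal.tendsto_ofReal this)
      refine le_antisymm ?_ zero_le
      exact ge_of_tendsto' htend fun k => le_trans (measure_mono (hNsub k)) (key1' z k)
    have hcompl : {ω : ℕ → E | ∃ n, ω n ∈ B} = Nᶜ := by
      ext ω; simp [hN]
    rw [hcompl, measure_compl hNmeas (measure_ne_top _ _), hN0, measure_univ, tsub_zero]
  · -- exponential moment
    intro β₁ hβ1 hβ2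
    set a : ℝ≥0∞ := ENNReal.ofReal (Real.exp (β₁ * m)) with ha
    set b : ℝ≥0∞ := ENNReal.ofReal (1 - p) with hb
    have hab : a * b < 1 := by
      rw [ha, hb, ← ENNReal.ofReal_mul (Real.exp_nonneg _)]
      rw [ENNReal.ofReal_lt_one]
      calc Real.exp (β₁ * m) * (1 - p) < Real.exp (β₁ * m) * Real.exp (-(β₁ * m)) := by
            refine mul_lt_mul_of_pos_left hβ2 (Real.exp_pos _)
        _ = 1 := by rw [← Real.exp_add]; simp
    have hbound : ∀ z : E, ∫⁻ ω, ENNReal.ofReal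
        (Real.exp (β₁ * (sInf {n : ℕ | ω n ∈ B} : ℕ))) ∂(P z)
        ≤ 1 + a * (1 - a * b)⁻¹ := by
      intro z
      -- pointwise bound
      have hpt : ∀ ω : ℕ → E, ENNReal.ofReal (Real.exp (β₁ * (sInf {n : ℕ | ω n ∈ B} : ℕ)))
          ≤ 1 + ∑' k : ℕ, ENNReal.ofReal (Real.exp (β₁ * ((k + 1) * m)))
              * (Aset k).indicator (fun _ => (1 : ℝ≥0∞)) ω := by
        intro ω
        set τ := sInf {n : ℕ | ω n ∈ B} with hτ
        rcases Nat.eq_zero_or_pos τ with hτ0 | hτpos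
        · rw [hτ0]
          simp only [Nat.cast_zero, mul_zero, Real.exp_zero, ENNReal.ofReal_one]
          exact le_self_add
        · set k := (τ - 1) / m with hk
          have hmpos : 0 < m := hm
          have h1 : k * m ≤ τ - 1 := hk ▸ Nat.div_mul_le_self _ _
          have h2 : τ ≤ (k + 1) * m := by
            have hdm := Nat.div_add_mod (τ - 1) m
            have hmod := Nat.mod_lt (τ - 1) hmpos
            have hkm : (k + 1) * m = m * ((τ - 1) / m) + m := by rw [hk]; ring_nf
            rw [hkm]
            generalize m * ((τ - 1) / m) = t at hdm ⊢
            generalize (τ - 1) % m = r at hdm hmod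
            omega
          have hωA : ω ∈ Aset k := by
            intro j hj hjB
            have hji : τ ≤ j := Nat.sInf_le hjB
            have hj1 : j ≤ τ - 1 := le_trans hj h1
            omega
          have hterm : ENNReal.ofReal (Real.exp (β₁ * (τ : ℕ)))
              ≤ ENNReal.ofReal (Real.exp (β₁ * ((k + 1) * m)))
                * (Aset k).indicator (fun _ => (1 : ℝ≥0∞)) ω := by
            rw [Set.indicator_of_mem hωA, mul_one]
            refine ENNReal.ofReal_le_ofReal (Real.exp_le_exp.mpr ?_)
            have : (τ : ℝ) ≤ ((k + 1) * m : ℕ) := by exact_mod_cast h2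
            calc β₁ * (τ : ℕ) ≤ β₁ * ((k + 1) * m : ℕ) :=
                mul_le_mul_of_nonneg_left this hβ1.le
              _ = β₁ * ((k + 1) * m) := by push_cast; ring
          calc ENNReal.ofReal (Real.exp (β₁ * (τ : ℕ)))
              ≤ ENNReal.ofReal (Real.exp (β₁ * ((k + 1) * m)))
                * (Aset k).indicator (fun _ => (1 : ℝ≥0∞)) ω := hterm
            _ ≤ ∑' k : ℕ, ENNReal.ofReal (Real.exp (β₁ * ((k + 1) * m)))
                * (Aset k).indicator (fun _ => (1 : ℝ≥0∞)) ω := ENNReal.le_tsum k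
            _ ≤ _ := le_add_self
      calc ∫⁻ ω, ENNReal.ofReal (Real.exp (β₁ * (sInf {n : ℕ | ω n ∈ B} : ℕ))) ∂(P z)
          ≤ ∫⁻ ω, (1 + ∑' k : ℕ, ENNReal.ofReal (Real.exp (β₁ * ((k + 1) * m)))
              * (Aset k).indicator (fun _ => (1 : ℝ≥0∞)) ω) ∂(P z) := lintegral_mono hpt
        _ = 1 + ∫⁻ ω, ∑' k : ℕ, ENNReal.ofReal (Real.exp (β₁ * ((k + 1) * m)))
              * (Aset k).indicator (fun _ => (1 : ℝ≥0∞)) ω ∂(P z) := by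
            rw [lintegral_add_left measurable_const, lintegral_one, measure_univ]
        _ = 1 + ∑' k : ℕ, ∫⁻ ω, ENNReal.ofReal (Real.exp (β₁ * ((k + 1) * m)))
              * (Aset k).indicator (fun _ => (1 : ℝ≥0∞)) ω ∂(P z) := by
            rw [lintegral_tsum fun k => ((measurable_const.indicator
              (hAmeas k)).const_mul _).aemeasurable]
        _ = 1 + ∑' k : ℕ, ENNReal.ofReal (Real.exp (β₁ * ((k + 1) * m))) * P z (Aset k) := by
            congr 1
            refine tsum_congr fun k => ?_
            rw [lintegral_const_mul _ (measurable_const.indicator (hAmeas k)),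
              lintegral_indicator_const (hAmeas k), one_mul]
        _ ≤ 1 + ∑' k : ℕ, a * (a * b) ^ k := by
            refine add_le_add_right (ENNReal.tsum_le_tsum fun k => ?_) 1
            have hc : ENNReal.ofReal (Real.exp (β₁ * ((k + 1) * m))) = a ^ (k + 1) := by
              rw [ha, ← ENNReal.ofReal_pow (Real.exp_nonneg _), ← Real.exp_nat_mul]
              congr 1
              push_cast
              ring_nf
            rw [hc]
            calc a ^ (k + 1) * P z (Aset k) ≤ a ^ (k + 1) * b ^ k := by
                  refine mul_le_mul_right ?_ _
                  rw [hb]; exact key1 z k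
              _ = a * (a * b) ^ k := by ring
        _ = 1 + a * (1 - a * b)⁻¹ := by
            rw [ENNReal.tsum_mul_left, ENNReal.tsum_geometric]
    have hfin : (1 : ℝ≥0∞) + a * (1 - a * b)⁻¹ < ⊤ := by
      refine ENNReal.add_lt_top.mpr ⟨ENNReal.one_lt_top, ENNReal.mul_lt_top ?_ ?_⟩
      · exact ENNReal.ofReal_lt_top
      · rw [ENNReal.inv_lt_top]
        exact tsub_pos_of_lt hab
    exact lt_of_le_of_lt (iSup_le hbound) hfin
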